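/- Let 𝒞 be a 3XOR instance and r ∈ ℕ. If there exists a degree-r pseudo-expectation for 𝒞, then there exists a degree-⌊r/3⌋ pseudo-expectation for isomorphism of the graphs G_𝒞 and G_{homog(𝒞)}. (Equivalently: if every SOS refutation of the satisfiability of 𝒞 requires degree exceeding r, then every SOS refutation of the statement 'G_𝒞 and G_{homog(𝒞)} are isomorphic' requires degree exceeding r/3.) -/

import Mathlib

/-!
A satisfying assignment `A` of `𝒞` gives an isomorphism `G_𝒞 ≅ G_{homog(𝒞)}`: it sends
`x ↦ a` to `x ↦ a + A x` and `α_C` to `(α + A|_C)_C`. Written in the variables of `A`, this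
turns each `Π[u ↦ v]` into a polynomial of degree at most `3` (`A[x ↦ a + b]` between variable
vertices, a product of three such variables between constraint vertices, `0` otherwise).
Under this substitution every isomorphism axiom becomes a low-degree consequence of the 3XOR
axioms, so composing a degree-`r` pseudo-expectation for `𝒞` with it yields one of degree
`r / 3` for isomorphism. For edge preservation, the row constraints make the products
`Π[u₁ ↦ v₁] Π[u₂ ↦ v₂]` over all pairs `(v₁, v₂)` sum to `1`, and for an edge `u₁ u₂` each
non-edge `v₁ v₂` contributes a multiple of some `A[x ↦ 0] A[x ↦ 1]`.
-/

open scoped Classical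

noncomputable section

namespace Giso

/-- The finset of edges of a simple graph on a finite vertex type. -/
def edges {V : Type*} [Fintype V] (G : SimpleGraph V) : Finset (Sym2 V) :=
  Finset.univ.filter fun e => e ∈ G.edgeSet

/-- A 3XOR equation on `n` variables: three distinct variable indices and a
right-hand side in `Z₂`. -/
structure XorEq (n : ℕ) where
  idx : Fin 3 → Fin n
  rhs : ZMod 2
  inj : Function.Injective idx

/-- A 3XOR instance: a list of `m` equations. -/
abbrev XorInstance (n m : ℕ) := Fin m → XorEq n

/-- The homogeneous version of an equation: the right-hand side is replaced by `0`. -/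
def XorEq.homog {n : ℕ} (C : XorEq n) : XorEq n := ⟨C.idx, 0, C.inj⟩

/-- The homogeneous version of an instance. -/
def homogInst {n m : ℕ} (𝒞 : XorInstance n m) : XorInstance n m := fun i => (𝒞 i).homog

/-- The satisfying assignments of an equation (there are four of them). -/
abbrev SatAssign {n : ℕ} (C : XorEq n) : Type :=
  {α : Fin 3 → ZMod 2 // α 0 + α 1 + α 2 = C.rhs}

/-- Vertices of the gadget graph `G_𝒞`: variable vertices `x ↦ a` and constraint
vertices `α_C`. -/
abbrev GVert {n m : ℕ} (𝒞 : XorInstance n m) : Type :=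
  (Fin n × ZMod 2) ⊕ (Σ i : Fin m, SatAssign (𝒞 i))

/-- The gadget graph `G_𝒞` associated to a 3XOR instance `𝒞`. -/
def gadgetGraph {n m : ℕ} (𝒞 : XorInstance n m) : SimpleGraph (GVert 𝒞) :=
  SimpleGraph.fromRel fun u v =>
    (∃ (j : Fin n) (a a' : ZMod 2), u = Sum.inl (j, a) ∧ v = Sum.inl (j, a')) ∨
    (∃ (i : Fin m) (α α' : SatAssign (𝒞 i)), u = Sum.inr ⟨i, α⟩ ∧ v = Sum.inr ⟨i, α'⟩) ∨
    (∃ (i : Fin m) (α : SatAssign (𝒞 i)) (t : Fin 3),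
      u = Sum.inl ((𝒞 i).idx t, α.1 t) ∧ v = Sum.inr ⟨i, α⟩)

open MvPolynomial in
/-- A degree-`r` pseudo-expectation for the 3XOR instance `𝒞`, in the indeterminates
`A[x ↦ a]` (represented by `X (x, a)`).  Existence is equivalent to the nonexistence of
a degree-`r` SOS refutation of the satisfiability of `𝒞`. -/
def IsXorPseudoExpectation {n m : ℕ} (𝒞 : XorInstance n m) (r : ℕ)
    (PE : MvPolynomial (Fin n × ZMod 2) ℝ →ₗ[ℝ] ℝ) : Prop :=
  PE 1 = 1 ∧
  (∀ (x : Fin n) (a : ZMod 2) (q : MvPolynomial (Fin n × ZMod 2) ℝ),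
    q.totalDegree + 2 ≤ r → PE (((X (x, a)) ^ 2 - X (x, a)) * q) = 0) ∧
  (∀ (x : Fin n) (q : MvPolynomial (Fin n × ZMod 2) ℝ), q.totalDegree + 1 ≤ r →
    PE ((X (x, 0) + X (x, 1) - 1) * q) = 0) ∧
  (∀ (i : Fin m) (q : MvPolynomial (Fin n × ZMod 2) ℝ), q.totalDegree + 3 ≤ r →
    PE ((∑ α : SatAssign (𝒞 i),
        X ((𝒞 i).idx 0, α.1 0) * X ((𝒞 i).idx 1, α.1 1) * X ((𝒞 i).idx 2, α.1 2) - 1)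
      * q) = 0) ∧
  (∀ p : MvPolynomial (Fin n × ZMod 2) ℝ, 2 * p.totalDegree ≤ r → 0 ≤ PE (p ^ 2))

open MvPolynomial in
/-- A degree-`r` pseudo-expectation for isomorphism of the graphs `G` and `H`, in the
indeterminates `Π[u ↦ v]` (represented by `X (u, v)`).  The edge-preservation
constraint is written with sums over ordered pairs on both sides, which is exactly
twice the polynomial of the informal statement, hence an equivalent condition. -/
def IsIsoPseudoExpectation {V W : Type*} [Fintype V] [Fintype W]
    (G : SimpleGraph V) (H : SimpleGraph W) (r : ℕ)
    (PE : MvPolynomial (V × W) ℝ →ₗ[ℝ] ℝ) : Prop :=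
  PE 1 = 1 ∧
  (∀ (u : V) (v : W) (q : MvPolynomial (V × W) ℝ), q.totalDegree + 2 ≤ r →
    PE (((X (u, v)) ^ 2 - X (u, v)) * q) = 0) ∧
  (∀ (u : V) (q : MvPolynomial (V × W) ℝ), q.totalDegree + 1 ≤ r →
    PE ((∑ v : W, X (u, v) - 1) * q) = 0) ∧
  (∀ (v : W) (q : MvPolynomial (V × W) ℝ), q.totalDegree + 1 ≤ r →
    PE ((∑ u : V, X (u, v) - 1) * q) = 0) ∧
  (∀ p : MvPolynomial (V × W) ℝ, 2 * p.totalDegree + 2 ≤ r →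
    0 ≤ PE (((∑ uu ∈ Finset.univ.filter (fun uu : V × V => G.Adj uu.1 uu.2),
        ∑ vv ∈ Finset.univ.filter (fun vv : W × W => H.Adj vv.1 vv.2),
          X (uu.1, vv.1) * X (uu.2, vv.2)) - C (2 * ((edges G).card : ℝ))) * p ^ 2)) ∧
  (∀ p : MvPolynomial (V × W) ℝ, 2 * p.totalDegree ≤ r → 0 ≤ PE (p ^ 2))

open MvPolynomial Finset

lemma totalDegree_prod_X_le {σ R ι : Type*} [CommSemiring R] [Nontrivial R] (t : Finset ι)
    (v : ι → σ) : (∏ i ∈ t, (X (v i) : MvPolynomial σ R)).totalDegree ≤ #t :=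
  (totalDegree_finsetProd _ _).trans (by simp)

lemma totalDegree_aeval_le {σ τ R : Type*} [CommSemiring R] {s : σ → MvPolynomial τ R}
    {k : ℕ} (hs : ∀ i, (s i).totalDegree ≤ k) (p : MvPolynomial σ R) :
    (aeval s p).totalDegree ≤ k * p.totalDegree := by
  rw [aeval_def, eval₂_eq]
  refine totalDegree_finsetSum_le fun d hd => (totalDegree_mul _ _).trans ?_
  rw [algebraMap_eq, totalDegree_C, zero_add]
  calc (∏ i ∈ d.support, s i ^ d i).totalDegree
      ≤ ∑ i ∈ d.support, k * d i := (totalDegree_finsetProd _ _).trans <|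
        sum_le_sum fun i _ => (totalDegree_pow _ _).trans (by rw [mul_comm]; gcongr; exact hs i)
    _ ≤ k * p.totalDegree := by rw [← mul_sum]; exact Nat.mul_le_mul_left _ (le_totalDegree hd)

section TruncIdeal

variable {σ R : Type*} [CommSemiring R]

/-- What a degree-`r` proof may treat as zero, where a generator `(g, d)` is an axiom `g = 0`
of degree `d`. -/
def truncIdeal (gens : Set (MvPolynomial σ R × ℕ)) (r : ℕ) : Submodule R (MvPolynomial σ R) :=
  Submodule.span R {p | ∃ g ∈ gens, ∃ q : MvPolynomial σ R, q.totalDegree + g.2 ≤ r ∧ p = g.1 * q}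

variable {gens : Set (MvPolynomial σ R × ℕ)}

lemma gen_mul_mem_truncIdeal {g q : MvPolynomial σ R} {d r : ℕ} (hg : (g, d) ∈ gens)
    (hq : q.totalDegree + d ≤ r) : g * q ∈ truncIdeal gens r :=
  Submodule.subset_span ⟨(g, d), hg, q, hq, rfl⟩

lemma gen_mem_truncIdeal {g : MvPolynomial σ R} {d r : ℕ} (hg : (g, d) ∈ gens) (hd : d ≤ r) :
    g ∈ truncIdeal gens r :=
  mul_one g ▸ gen_mul_mem_truncIdeal hg (by simpa using hd)

lemma mul_mem_truncIdeal {f : MvPolynomial σ R} {d r : ℕ} (hf : f ∈ truncIdeal gens d)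
    (g : MvPolynomial σ R) (h : d + g.totalDegree ≤ r) : f * g ∈ truncIdeal gens r := by
  suffices truncIdeal gens d ≤ (truncIdeal gens r).comap (LinearMap.mulRight R g) from this hf
  refine Submodule.span_le.mpr ?_
  rintro _ ⟨⟨g', d'⟩, hg', q, hq, rfl⟩
  rw [SetLike.mem_coe, Submodule.mem_comap, LinearMap.mulRight_apply, mul_assoc]
  exact gen_mul_mem_truncIdeal hg' (by have := totalDegree_mul q g; omega)

lemma truncIdeal_mono : Monotone (truncIdeal gens) := fun d r h f hf =>
  mul_one f ▸ mul_mem_truncIdeal hf 1 (by simpa using h)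

lemma truncIdeal_le_ker {M : Type*} [AddCommMonoid M] [Module R M]
    {L : MvPolynomial σ R →ₗ[R] M} {r : ℕ}
    (hL : ∀ g ∈ gens, ∀ q : MvPolynomial σ R, q.totalDegree + g.2 ≤ r → L (g.1 * q) = 0) :
    truncIdeal gens r ≤ LinearMap.ker L :=
  Submodule.span_le.mpr fun _ ⟨g, hg, q, hq, hp⟩ => hp ▸ hL g hg q hq

end TruncIdeal

section Substitution

variable {σ V W : Type*}

lemma map_aeval_mul_eq_zero {R M : Type*} [CommSemiring R] [AddCommMonoid M] [Module R M]
    {gens : Set (MvPolynomial σ R × ℕ)} {L : MvPolynomial σ R →ₗ[R] M}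
    {s : V → MvPolynomial σ R} {k r d : ℕ} (hs : ∀ v, (s v).totalDegree ≤ k)
    (hL : truncIdeal gens r ≤ LinearMap.ker L) {f q : MvPolynomial V R}
    (hf : aeval s f ∈ truncIdeal gens (k * d)) (hq : q.totalDegree + d ≤ r / k) :
    L (aeval s (f * q)) = 0 := by
  rw [map_mul]
  refine hL (mul_mem_truncIdeal hf _ ?_)
  have hmul : k * (q.totalDegree + d) ≤ k * (r / k) := Nat.mul_le_mul_left k hq
  have := totalDegree_aeval_le hs q
  have := Nat.mul_div_le r k
  nlinarith

variable {R : Type*} [CommRing R] {gens : Set (MvPolynomial σ R × ℕ)}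
  {s : V × W → MvPolynomial σ R} {k : ℕ}

/-- Modulo the row constraints, the products `s (u₁, v₁) * s (u₂, v₂)` over all pairs
`(v₁, v₂)` sum to `1`; so the edge sum is `1` once the non-adjacent pairs vanish. -/
lemma sum_adj_mul_sub_one_mem [Fintype W] (H : SimpleGraph W)
    (hdeg : ∀ uv, (s uv).totalDegree ≤ k) (hrow : ∀ u, ∑ v, s (u, v) - 1 ∈ truncIdeal gens k)
    {u₁ u₂ : V}
    (hnon : ∀ v₁ v₂, ¬ H.Adj v₁ v₂ → s (u₁, v₁) * s (u₂, v₂) ∈ truncIdeal gens (2 * k)) :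
    ∑ vv ∈ univ.filter (fun vv : W × W => H.Adj vv.1 vv.2), s (u₁, vv.1) * s (u₂, vv.2) - 1
      ∈ truncIdeal gens (2 * k) := by
  have hprod : (∑ v, s (u₁, v)) * (∑ v, s (u₂, v)) - 1 ∈ truncIdeal gens (2 * k) := by
    have hdeg₂ : (∑ v, s (u₂, v)).totalDegree ≤ k :=
      totalDegree_finsetSum_le fun v _ => hdeg (u₂, v)
    rw [show (∑ v, s (u₁, v)) * (∑ v, s (u₂, v)) - 1
        = (∑ v, s (u₁, v) - 1) * (∑ v, s (u₂, v)) + (∑ v, s (u₂, v) - 1) by ring]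
    exact add_mem (mul_mem_truncIdeal (hrow u₁) _ (by omega))
      (truncIdeal_mono (by omega) (hrow u₂))
  rw [sum_mul_sum, ← Fintype.sum_prod_type', ← sum_filter_add_sum_filter_not univ
    (fun vv : W × W => H.Adj vv.1 vv.2)] at hprod
  have hnon_sum : ∑ vv ∈ univ.filter (fun vv : W × W => ¬ H.Adj vv.1 vv.2),
      s (u₁, vv.1) * s (u₂, vv.2) ∈ truncIdeal gens (2 * k) :=
    sum_mem fun vv hvv => hnon _ _ (mem_filter.mp hvv).2
  convert sub_mem hprod hnon_sum using 1
  ring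

lemma card_filter_adj_eq_two_mul_card_edges [Fintype V] (G : SimpleGraph V) :
    #(univ.filter fun uu : V × V => G.Adj uu.1 uu.2) = 2 * #(edges G) := by
  rw [show edges G = G.edgeFinset by ext; simp [edges], SimpleGraph.two_mul_card_edgeFinset]

lemma aeval_edgeAxiom_mem [Fintype V] [Fintype W] (G : SimpleGraph V) (H : SimpleGraph W)
    {r : ℕ} (hedge : ∀ u₁ u₂, G.Adj u₁ u₂ →
      ∑ vv ∈ univ.filter (fun vv : W × W => H.Adj vv.1 vv.2),
        s (u₁, vv.1) * s (u₂, vv.2) - 1 ∈ truncIdeal gens r) :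
    aeval s ((∑ uu ∈ univ.filter (fun uu : V × V => G.Adj uu.1 uu.2),
        ∑ vv ∈ univ.filter (fun vv : W × W => H.Adj vv.1 vv.2),
          X (uu.1, vv.1) * X (uu.2, vv.2)) - C (2 * ((edges G).card : R)))
      ∈ truncIdeal gens r := by
  have hcard : C (2 * (#(edges G) : R))
      = ∑ _uu ∈ univ.filter (fun uu : V × V => G.Adj uu.1 uu.2), (1 : MvPolynomial σ R) := by
    rw [sum_const, card_filter_adj_eq_two_mul_card_edges, nsmul_one, ← map_natCast C]
    push_cast; rfl
  rw [map_sub, aeval_C, algebraMap_eq, hcard, map_sum, ← sum_sub_distrib]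
  simp only [map_sum, map_mul, aeval_X]
  exact sum_mem fun uu huu => hedge _ _ (mem_filter.mp huu).2

theorem isIsoPseudoExpectation_comp_aeval [Fintype V] [Fintype W]
    {G : SimpleGraph V} {H : SimpleGraph W} {gens : Set (MvPolynomial σ ℝ × ℕ)} {r k : ℕ}
    {L : MvPolynomial σ ℝ →ₗ[ℝ] ℝ} (hL1 : L 1 = 1) (hL : truncIdeal gens r ≤ LinearMap.ker L)
    (hLsq : ∀ p : MvPolynomial σ ℝ, 2 * p.totalDegree ≤ r → 0 ≤ L (p ^ 2))
    {s : V × W → MvPolynomial σ ℝ} (hdeg : ∀ uv, (s uv).totalDegree ≤ k)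
    (hbool : ∀ uv, s uv ^ 2 - s uv ∈ truncIdeal gens (2 * k))
    (hrow : ∀ u, ∑ v, s (u, v) - 1 ∈ truncIdeal gens k)
    (hcol : ∀ v, ∑ u, s (u, v) - 1 ∈ truncIdeal gens k)
    (hnon : ∀ u₁ u₂ v₁ v₂, G.Adj u₁ u₂ → ¬ H.Adj v₁ v₂ →
      s (u₁, v₁) * s (u₂, v₂) ∈ truncIdeal gens (2 * k)) :
    IsIsoPseudoExpectation G H (r / k) (L.comp (aeval s).toLinearMap) := by
  simp only [IsIsoPseudoExpectation, LinearMap.coe_comp, Function.comp_apply,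
    AlgHom.toLinearMap_apply]
  refine ⟨by rwa [map_one], fun u v q hq => ?_, fun u q hq => ?_, fun v q hq => ?_,
    fun p hp => ?_, fun p hp => ?_⟩
  · exact map_aeval_mul_eq_zero hdeg hL (by rw [mul_comm]; simpa using hbool (u, v)) hq
  · exact map_aeval_mul_eq_zero hdeg hL (by simpa using hrow u) hq
  · exact map_aeval_mul_eq_zero hdeg hL (by simpa using hcol v) hq
  · refine (map_aeval_mul_eq_zero hdeg hL (d := 2) ?_ ?_).ge
    · rw [mul_comm k]
      exact aeval_edgeAxiom_mem G H fun u₁ u₂ hu =>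
        sum_adj_mul_sub_one_mem H hdeg hrow fun v₁ v₂ hv => hnon u₁ u₂ v₁ v₂ hu hv
    · have := totalDegree_pow p 2
      omega
  · rw [map_pow]
    refine hLsq _ ?_
    have := totalDegree_aeval_le hdeg p
    have := Nat.mul_div_le r k
    nlinarith

end Substitution

section XorIdeal

variable {n m : ℕ}

abbrev XorPoly (n : ℕ) := MvPolynomial (Fin n × ZMod 2) ℝ

def assignMonomial (C : XorEq n) (γ : Fin 3 → ZMod 2) : XorPoly n := ∏ t, X (C.idx t, γ t)

def xorGens (𝒞 : XorInstance n m) : Set (XorPoly n × ℕ) :=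
  {(X (x, a) ^ 2 - X (x, a), 2) | (x : Fin n) (a : ZMod 2)} ∪
  {(∑ a, X (x, a) - 1, 1) | x : Fin n} ∪
  {(∑ γ : SatAssign (𝒞 i), assignMonomial (𝒞 i) γ.1 - 1, 3) | i : Fin m}

lemma IsXorPseudoExpectation.truncIdeal_le_ker {𝒞 : XorInstance n m} {r : ℕ}
    {PE : XorPoly n →ₗ[ℝ] ℝ} (h : IsXorPseudoExpectation 𝒞 r PE) :
    truncIdeal (xorGens 𝒞) r ≤ LinearMap.ker PE := by
  refine Giso.truncIdeal_le_ker ?_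
  rintro _ ((⟨x, a, rfl⟩ | ⟨x, rfl⟩) | ⟨i, rfl⟩) q hq
  · exact h.2.1 x a q hq
  · exact Fin.sum_univ_two (fun a => (X (x, a) : XorPoly n)) ▸ h.2.2.1 x q hq
  · simpa [assignMonomial, Fin.prod_univ_three] using h.2.2.2.1 i q hq

variable (𝒞 : XorInstance n m)

lemma X_sq_sub_X_mem (x : Fin n) (a : ZMod 2) :
    (X (x, a) ^ 2 - X (x, a) : XorPoly n) ∈ truncIdeal (xorGens 𝒞) 2 :=
  gen_mem_truncIdeal (Or.inl (Or.inl ⟨x, a, rfl⟩)) le_rfl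

lemma sum_X_sub_one_mem (x : Fin n) :
    ∑ a, (X (x, a) : XorPoly n) - 1 ∈ truncIdeal (xorGens 𝒞) 1 :=
  gen_mem_truncIdeal (Or.inl (Or.inr ⟨x, rfl⟩)) le_rfl

lemma sum_assignMonomial_sub_one_mem (i : Fin m) :
    ∑ γ : SatAssign (𝒞 i), assignMonomial (𝒞 i) γ.1 - 1 ∈ truncIdeal (xorGens 𝒞) 3 :=
  gen_mem_truncIdeal (Or.inr ⟨i, rfl⟩) le_rfl

lemma X_mul_X_mem_of_ne (x : Fin n) {a b : ZMod 2} (hab : a ≠ b) :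
    (X (x, a) * X (x, b) : XorPoly n) ∈ truncIdeal (xorGens 𝒞) 2 := by
  have hsum : ∑ c, (X (x, c) : XorPoly n) = X (x, a) + X (x, b) := by
    rw [show (univ : Finset (ZMod 2)) = {a, b} by revert a b; decide, sum_pair hab]
  rw [show (X (x, a) * X (x, b) : XorPoly n)
      = (∑ c, X (x, c) - 1) * X (x, b) - (X (x, b) ^ 2 - X (x, b)) by rw [hsum]; ring]
  exact sub_mem (mul_mem_truncIdeal (sum_X_sub_one_mem 𝒞 x) _ (by simp))
    (X_sq_sub_X_mem 𝒞 x b)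

lemma prod_X_sq_sub_prod_X_mem {ι : Type*} (t : Finset ι) (v : ι → Fin n × ZMod 2) :
    (∏ i ∈ t, (X (v i) : XorPoly n)) ^ 2 - ∏ i ∈ t, X (v i)
      ∈ truncIdeal (xorGens 𝒞) (2 * #t) := by
  induction t using Finset.cons_induction with
  | empty => simp
  | cons i t hi ih =>
    set P := ∏ i ∈ t, (X (v i) : XorPoly n)
    have hP : P.totalDegree ≤ #t := totalDegree_prod_X_le t v
    have hP2 := totalDegree_pow P 2
    rw [prod_cons, card_cons, show (X (v i) * P) ^ 2 - X (v i) * P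
      = (X (v i) ^ 2 - X (v i)) * P ^ 2 + (P ^ 2 - P) * X (v i) by ring]
    exact add_mem (mul_mem_truncIdeal (X_sq_sub_X_mem 𝒞 _ _) _ (by omega))
      (mul_mem_truncIdeal ih _ (by have := totalDegree_X (R := ℝ) (v i); omega))

lemma totalDegree_assignMonomial_le (C : XorEq n) (γ : Fin 3 → ZMod 2) :
    (assignMonomial C γ).totalDegree ≤ 3 := by
  simpa [assignMonomial] using totalDegree_prod_X_le (R := ℝ) univ fun t => (C.idx t, γ t)

lemma assignMonomial_sq_sub_mem (C : XorEq n) (γ : Fin 3 → ZMod 2) :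
    assignMonomial C γ ^ 2 - assignMonomial C γ ∈ truncIdeal (xorGens 𝒞) 6 := by
  simpa [assignMonomial] using prod_X_sq_sub_prod_X_mem 𝒞 univ fun t => (C.idx t, γ t)

lemma X_mul_assignMonomial_mem (C : XorEq n) {δ : Fin 3 → ZMod 2} {t : Fin 3} {b : ZMod 2}
    (hb : b ≠ δ t) : X (C.idx t, b) * assignMonomial C δ ∈ truncIdeal (xorGens 𝒞) 4 := by
  have hrest := totalDegree_prod_X_le (R := ℝ) (univ.erase t) fun s => (C.idx s, δ s)
  rw [assignMonomial, ← mul_prod_erase univ _ (mem_univ t), ← mul_assoc]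
  exact mul_mem_truncIdeal (X_mul_X_mem_of_ne 𝒞 _ hb) _ (by simp at hrest; omega)

lemma assignMonomial_mul_mem_of_ne (C : XorEq n) {γ δ : Fin 3 → ZMod 2} (h : γ ≠ δ) :
    assignMonomial C γ * assignMonomial C δ ∈ truncIdeal (xorGens 𝒞) 6 := by
  obtain ⟨t, ht⟩ := Function.ne_iff.mp h
  have hrest := totalDegree_prod_X_le (R := ℝ) (univ.erase t) fun s => (C.idx s, γ s)
  have hγ : assignMonomial C γ = X (C.idx t, γ t) * ∏ s ∈ univ.erase t, X (C.idx s, γ s) :=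
    (mul_prod_erase univ _ (mem_univ t)).symm
  rw [hγ, mul_right_comm]
  exact mul_mem_truncIdeal (X_mul_assignMonomial_mem 𝒞 C ht) _ (by simp at hrest; omega)

end XorIdeal

section Gadget

variable {n m : ℕ}

def SatAssign.shiftEquiv {C D : XorEq n} (γ : Fin 3 → ZMod 2)
    (hγ : γ 0 + γ 1 + γ 2 = C.rhs + D.rhs) : SatAssign C ≃ SatAssign D where
  toFun α := ⟨α.1 + γ, by simp only [Pi.add_apply]; grind [α.2]⟩
  invFun β := ⟨β.1 + γ, by simp only [Pi.add_apply]; grind [β.2]⟩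
  left_inv α := by ext t; simp only [Pi.add_apply]; grind
  right_inv β := by ext t; simp only [Pi.add_apply]; grind

lemma sum_satAssign_add {M : Type*} [AddCommMonoid M] {C D : XorEq n}
    (f : (Fin 3 → ZMod 2) → M) (γ : Fin 3 → ZMod 2) (hγ : γ 0 + γ 1 + γ 2 = C.rhs + D.rhs) :
    ∑ α : SatAssign C, f (α.1 + γ) = ∑ β : SatAssign D, f β.1 :=
  (SatAssign.shiftEquiv γ hγ).sum_comp fun β => f β.1

variable (𝒞 : XorInstance n m)

lemma gadgetGraph_adj_inl_inl {x y : Fin n} {a b : ZMod 2} :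
    (gadgetGraph 𝒞).Adj (.inl (x, a)) (.inl (y, b)) ↔ x = y ∧ a ≠ b := by
  grind [gadgetGraph, SimpleGraph.fromRel_adj]

lemma gadgetGraph_adj_inl_inr {x : Fin n} {a : ZMod 2} {i : Fin m} {α : SatAssign (𝒞 i)} :
    (gadgetGraph 𝒞).Adj (.inl (x, a)) (.inr ⟨i, α⟩) ↔ ∃ t, x = (𝒞 i).idx t ∧ a = α.1 t := by
  simp [gadgetGraph, Subtype.ext_iff, α.2]

lemma gadgetGraph_adj_inr_inr {s s' : Σ i, SatAssign (𝒞 i)} :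
    (gadgetGraph 𝒞).Adj (.inr s) (.inr s') ↔ s.1 = s'.1 ∧ s ≠ s' := by
  grind [gadgetGraph, SimpleGraph.fromRel_adj]

def gadgetSubst : GVert 𝒞 × GVert (homogInst 𝒞) → XorPoly n
  | (.inl (x, a), .inl (y, b)) => if x = y then X (x, a + b) else 0
  | (.inr ⟨i, α⟩, .inr ⟨j, β⟩) => if i = j then assignMonomial (𝒞 i) (α.1 + β.1) else 0
  | _ => 0

lemma totalDegree_gadgetSubst_le (uv : GVert 𝒞 × GVert (homogInst 𝒞)) :
    (gadgetSubst 𝒞 uv).totalDegree ≤ 3 := by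
  rcases uv with ⟨⟨x, a⟩ | ⟨i, α⟩, ⟨y, b⟩ | ⟨j, β⟩⟩ <;> simp only [gadgetSubst] <;>
    (try split_ifs) <;> simp [totalDegree_X, totalDegree_assignMonomial_le]

lemma gadgetSubst_sq_sub_mem (uv : GVert 𝒞 × GVert (homogInst 𝒞)) :
    gadgetSubst 𝒞 uv ^ 2 - gadgetSubst 𝒞 uv ∈ truncIdeal (xorGens 𝒞) 6 := by
  rcases uv with ⟨⟨x, a⟩ | ⟨i, α⟩, ⟨y, b⟩ | ⟨j, β⟩⟩
  · simp only [gadgetSubst]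
    split_ifs
    · exact truncIdeal_mono (by norm_num) (X_sq_sub_X_mem 𝒞 x _)
    · simp
  · simp [gadgetSubst]
  · simp [gadgetSubst]
  · simp only [gadgetSubst]
    split_ifs
    · exact assignMonomial_sq_sub_mem 𝒞 _ _
    · simp

lemma sum_X_add_sub_one_mem (x : Fin n) (a : ZMod 2) :
    ∑ b, (X (x, a + b) : XorPoly n) - 1 ∈ truncIdeal (xorGens 𝒞) 3 := by
  rw [show ∑ b, (X (x, a + b) : XorPoly n) = ∑ c, X (x, c) from
    Equiv.sum_comp (Equiv.addLeft a) fun c => X (x, c)]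
  exact truncIdeal_mono (by norm_num) (sum_X_sub_one_mem 𝒞 x)

lemma sum_gadgetSubst_left_sub_one_mem (u : GVert 𝒞) :
    ∑ v, gadgetSubst 𝒞 (u, v) - 1 ∈ truncIdeal (xorGens 𝒞) 3 := by
  rcases u with ⟨x, a⟩ | ⟨i, α⟩
  · simpa [gadgetSubst, Fintype.sum_sum_type, Fintype.sum_prod_type]
      using sum_X_add_sub_one_mem 𝒞 x a
  · simp only [gadgetSubst, Fintype.sum_sum_type, sum_const_zero, add_comm α.1,
      Fintype.sum_sigma, sum_ite_irrel, sum_ite_eq, mem_univ, ↓reduceIte, zero_add]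
    rw [sum_satAssign_add _ α.1 (by simpa [homogInst, XorEq.homog] using α.2)]
    exact sum_assignMonomial_sub_one_mem 𝒞 i

lemma sum_gadgetSubst_right_sub_one_mem (v : GVert (homogInst 𝒞)) :
    ∑ u, gadgetSubst 𝒞 (u, v) - 1 ∈ truncIdeal (xorGens 𝒞) 3 := by
  rcases v with ⟨x, b⟩ | ⟨i, β⟩
  · simpa [gadgetSubst, Fintype.sum_sum_type, Fintype.sum_prod_type, add_comm _ b]
      using sum_X_add_sub_one_mem 𝒞 x b
  · simp only [gadgetSubst, Fintype.sum_sum_type, sum_const_zero, Fintype.sum_sigma,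
      sum_ite_irrel, sum_ite_eq', mem_univ, ↓reduceIte, zero_add]
    rw [sum_satAssign_add (D := 𝒞 i) _ β.1 (by rw [CharTwo.add_self_eq_zero]; exact β.2)]
    exact sum_assignMonomial_sub_one_mem 𝒞 i

lemma gadgetSubst_mul_mem_of_inl_inl {x : Fin n} {a a' : ZMod 2} (ha : a ≠ a')
    {v₁ v₂ : GVert (homogInst 𝒞)} (hv : ¬ (gadgetGraph (homogInst 𝒞)).Adj v₁ v₂) :
    gadgetSubst 𝒞 (.inl (x, a), v₁) * gadgetSubst 𝒞 (.inl (x, a'), v₂)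
      ∈ truncIdeal (xorGens 𝒞) 6 := by
  rcases v₁ with ⟨y, b⟩ | _ <;> rcases v₂ with ⟨y', b'⟩ | _ <;>
    simp only [gadgetSubst, zero_mul, mul_zero, zero_mem]
  split_ifs with hy hy'
  · subst hy hy'
    obtain rfl : b = b' := by simpa [gadgetGraph_adj_inl_inl] using hv
    exact truncIdeal_mono (by norm_num) (X_mul_X_mem_of_ne 𝒞 x (by simpa using ha))
  all_goals simp

lemma gadgetSubst_mul_mem_of_inl_inr {i : Fin m} {α : SatAssign (𝒞 i)} {t : Fin 3}
    {v₁ v₂ : GVert (homogInst 𝒞)} (hv : ¬ (gadgetGraph (homogInst 𝒞)).Adj v₁ v₂) :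
    gadgetSubst 𝒞 (.inl ((𝒞 i).idx t, α.1 t), v₁) * gadgetSubst 𝒞 (.inr ⟨i, α⟩, v₂)
      ∈ truncIdeal (xorGens 𝒞) 6 := by
  rcases v₁ with ⟨y, b⟩ | _ <;> rcases v₂ with _ | ⟨j, β⟩ <;>
    simp only [gadgetSubst, zero_mul, mul_zero, zero_mem]
  split_ifs with hy hj
  · subst hy hj
    have hb : b ≠ β.1 t := fun hb => hv ((gadgetGraph_adj_inl_inr _).mpr ⟨t, rfl, hb⟩)
    exact truncIdeal_mono (by norm_num) (X_mul_assignMonomial_mem 𝒞 _ (by simpa using hb))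
  all_goals simp

lemma gadgetSubst_mul_mem_of_inr_inr {i : Fin m} {α α' : SatAssign (𝒞 i)} (hα : α ≠ α')
    {v₁ v₂ : GVert (homogInst 𝒞)} (hv : ¬ (gadgetGraph (homogInst 𝒞)).Adj v₁ v₂) :
    gadgetSubst 𝒞 (.inr ⟨i, α⟩, v₁) * gadgetSubst 𝒞 (.inr ⟨i, α'⟩, v₂)
      ∈ truncIdeal (xorGens 𝒞) 6 := by
  rcases v₁ with _ | ⟨j, β⟩ <;> rcases v₂ with _ | ⟨j', β'⟩ <;>
    simp only [gadgetSubst, zero_mul, mul_zero, zero_mem]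
  split_ifs with hj hj'
  · subst hj hj'
    obtain rfl : β = β' := by simpa [gadgetGraph_adj_inr_inr] using hv
    refine assignMonomial_mul_mem_of_ne 𝒞 _ fun h => hα (Subtype.ext ?_)
    simpa using h
  all_goals simp

lemma gadgetSubst_mul_mem_of_adj_of_not_adj {u₁ u₂ : GVert 𝒞} {v₁ v₂ : GVert (homogInst 𝒞)}
    (hu : (gadgetGraph 𝒞).Adj u₁ u₂) (hv : ¬ (gadgetGraph (homogInst 𝒞)).Adj v₁ v₂) :
    gadgetSubst 𝒞 (u₁, v₁) * gadgetSubst 𝒞 (u₂, v₂) ∈ truncIdeal (xorGens 𝒞) 6 := by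
  rcases u₁ with ⟨x, a⟩ | ⟨i, α⟩ <;> rcases u₂ with ⟨y, b⟩ | ⟨j, β⟩
  · obtain ⟨rfl, hab⟩ := (gadgetGraph_adj_inl_inl 𝒞).mp hu
    exact gadgetSubst_mul_mem_of_inl_inl 𝒞 hab hv
  · obtain ⟨t, rfl, rfl⟩ := (gadgetGraph_adj_inl_inr 𝒞).mp hu
    exact gadgetSubst_mul_mem_of_inl_inr 𝒞 hv
  · obtain ⟨t, rfl, rfl⟩ := (gadgetGraph_adj_inl_inr 𝒞).mp hu.symm
    rw [mul_comm (gadgetSubst _ _)]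
    exact gadgetSubst_mul_mem_of_inl_inr 𝒞 (mt SimpleGraph.Adj.symm hv)
  · obtain ⟨rfl : i = j, hne⟩ := (gadgetGraph_adj_inr_inr 𝒞).mp hu
    exact gadgetSubst_mul_mem_of_inr_inr 𝒞 (by simpa using hne) hv

end Gadget

/-- **SOS completeness.**  If there is a degree-`r` pseudo-expectation for
the 3XOR instance `𝒞`, then there is a degree-`⌊r/3⌋` pseudo-expectation for
isomorphism of `G_𝒞` and `G_{homog(𝒞)}`. -/
theorem sos_completeness (n m : ℕ) (𝒞 : XorInstance n m) (r : ℕ)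
    (h : ∃ PE : MvPolynomial (Fin n × ZMod 2) ℝ →ₗ[ℝ] ℝ, IsXorPseudoExpectation 𝒞 r PE) :
    ∃ PE' : MvPolynomial (GVert 𝒞 × GVert (homogInst 𝒞)) ℝ →ₗ[ℝ] ℝ,
      IsIsoPseudoExpectation (gadgetGraph 𝒞) (gadgetGraph (homogInst 𝒞)) (r / 3) PE' := by
  obtain ⟨PE, hPE⟩ := h
  exact ⟨_, isIsoPseudoExpectation_comp_aeval hPE.1 hPE.truncIdeal_le_ker hPE.2.2.2.2
    (totalDegree_gadgetSubst_le 𝒞) (gadgetSubst_sq_sub_mem 𝒞)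
    (sum_gadgetSubst_left_sub_one_mem 𝒞) (sum_gadgetSubst_right_sub_one_mem 𝒞)
    fun _ _ _ _ => gadgetSubst_mul_mem_of_adj_of_not_adj 𝒞⟩

end Giso
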